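/- arXiv:math/0407119 — 2 statements merged into one kernel-verified Lean document; each statement's English description precedes it below -/
import Mathlib

section
/- Let v, w: [0,∞) → (0,∞) be measurable weights with C_{vw} = ∫_0^∞ (∫_s^∞ w(u)^{-1} du) v(s) ds < ∞. Then every x ∈ F_w^2 lies in F_v^1 and ‖x‖_{F_v^1} ≤ C_{vw}^{1/2} ‖x‖_{F_w^2}; i.e., the inclusion F_w^2 ↪ F_v^1 is a bounded linear map. -/
/-!
Writing `x' s = -∫_s^∞ x''` and applying Cauchy–Schwarz against the weight `w` gives
`x'(s)² ≤ (∫_s^∞ w⁻¹) · ‖x‖²_{F_w^2}`; multiplying by `v s` and integrating over `s` yields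
the bound.
Measurability of `x'² v` comes from continuity of tail integrals: `v` is the quotient of the
integrable `(∫_s^∞ w⁻¹) v(s)` by the continuous positive `∫_s^∞ w⁻¹`.
-/

open MeasureTheory Set

section

variable {α : Type*} [MeasurableSpace α] {μ : Measure α}

theorem integral_pos_of_ae_pos {f : α → ℝ} (hμ : μ ≠ 0) (hf : ∀ᵐ x ∂μ, 0 < f x)
    (hfi : Integrable f μ) : 0 < ∫ x, f x ∂μ := by
  rw [integral_pos_iff_support_of_nonneg_ae (hf.mono fun _ hx => hx.le) hfi]
  have hsupp : univ ≤ᵐ[μ] Function.support f :=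
    hf.mono fun x hx _ => hx.ne'
  exact (Measure.measure_univ_pos.2 hμ).trans_le (measure_mono_ae hsupp)

theorem sq_integral_le_integral_inv_mul_integral_sq_mul {w f : α → ℝ}
    (hw : ∀ᵐ x ∂μ, 0 < w x) (hw_inv : Integrable (fun x => (w x)⁻¹) μ)
    (hf : AEStronglyMeasurable f μ) (hfw : Integrable (fun x => f x ^ 2 * w x) μ) :
    (∫ x, f x ∂μ) ^ 2 ≤ (∫ x, (w x)⁻¹ ∂μ) * ∫ x, f x ^ 2 * w x ∂μ := by
  have hw_meas : AEMeasurable w μ := by simpa [Pi.inv_def] using hw_inv.aemeasurable.inv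
  set F : α → ℝ := fun x => √(w x)⁻¹
  set G : α → ℝ := fun x => |f x| * √(w x)
  have hF_sq : (fun x => F x ^ (2 : ℝ)) =ᵐ[μ] fun x => (w x)⁻¹ := by
    filter_upwards [hw] with x hx
    simp only [F, Real.rpow_two, Real.sq_sqrt (inv_nonneg.2 hx.le)]
  have hG_sq : (fun x => G x ^ (2 : ℝ)) =ᵐ[μ] fun x => f x ^ 2 * w x := by
    filter_upwards [hw] with x hx
    simp only [G, Real.rpow_two, mul_pow, sq_abs, Real.sq_sqrt hx.le]
  have hFG : (fun x => F x * G x) =ᵐ[μ] fun x => |f x| := by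
    filter_upwards [hw] with x hx
    simp only [F, G, Real.sqrt_inv]
    field_simp [(Real.sqrt_pos.2 hx).ne']
  have hF : MemLp F (ENNReal.ofReal 2) μ := by
    rw [ENNReal.ofReal_ofNat, memLp_two_iff_integrable_sq
      (Real.continuous_sqrt.comp_aestronglyMeasurable hw_inv.aestronglyMeasurable)]
    exact hw_inv.congr (by simpa only [Real.rpow_two] using hF_sq.symm)
  have hG : MemLp G (ENNReal.ofReal 2) μ := by
    rw [ENNReal.ofReal_ofNat, memLp_two_iff_integrable_sq (show AEStronglyMeasurable G μ from
      hf.norm.mul (Real.continuous_sqrt.comp_aestronglyMeasurable hw_meas.aestronglyMeasurable))]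
    exact hfw.congr (by simpa only [Real.rpow_two] using hG_sq.symm)
  have holder := integral_mul_le_Lp_mul_Lq_of_nonneg Real.HolderConjugate.two_two
    (.of_forall fun _ => Real.sqrt_nonneg _) (.of_forall fun _ => by positivity) hF hG
  have hfw_nonneg : 0 ≤ ∫ x, f x ^ 2 * w x ∂μ :=
    integral_nonneg_of_ae (hw.mono fun x hx => by positivity)
  rw [integral_congr_ae hFG, integral_congr_ae hF_sq, integral_congr_ae hG_sq,
    ← Real.sqrt_eq_rpow, ← Real.sqrt_eq_rpow, ← Real.sqrt_mul' _ hfw_nonneg] at holder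
  have hAB : 0 ≤ (∫ x, (w x)⁻¹ ∂μ) * ∫ x, f x ^ 2 * w x ∂μ :=
    mul_nonneg (integral_nonneg_of_ae (hw.mono fun x hx => by positivity)) hfw_nonneg
  rw [← sq_abs, ← Real.le_sqrt (abs_nonneg _) hAB]
  exact (abs_integral_le_integral_abs).trans holder

theorem MeasureTheory.AEStronglyMeasurable.of_mul_left {g v : α → ℝ}
    (hg : AEStronglyMeasurable g μ) (hg0 : ∀ᵐ x ∂μ, g x ≠ 0)
    (hgv : AEStronglyMeasurable (fun x => g x * v x) μ) :
    AEStronglyMeasurable v μ :=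
  (hg.aemeasurable.inv.mul hgv.aemeasurable).aestronglyMeasurable.congr <|
    hg0.mono fun x hx => by simp [inv_mul_cancel_left₀ hx]

end

theorem aestronglyMeasurable_integral_Ioi {μ : Measure ℝ} [NullSingletonClass μ] {g : ℝ → ℝ}
    {a : ℝ} (hg : IntegrableOn g (Ioi a) μ) :
    AEStronglyMeasurable (fun s => ∫ u in Ioi s, g u ∂μ) (μ.restrict (Ioi a)) :=
  (hg.continuousOn_Ici_primitive_Ioi.mono Ioi_subset_Ici_self).aestronglyMeasurable
    measurableSet_Ioi

theorem sq_integral_Ioi_le {μ : Measure ℝ} {w f : ℝ → ℝ} {a s : ℝ} (has : a ≤ s)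
    (hw : ∀ u ∈ Ioi a, 0 < w u) (hw_inv : IntegrableOn (fun u => (w u)⁻¹) (Ioi a) μ)
    (hf : AEStronglyMeasurable f (μ.restrict (Ioi a)))
    (hfw : IntegrableOn (fun u => f u ^ 2 * w u) (Ioi a) μ) :
    (∫ u in Ioi s, f u ∂μ) ^ 2 ≤ (∫ u in Ioi s, (w u)⁻¹ ∂μ) * ∫ u in Ioi a, f u ^ 2 * w u ∂μ := by
  have hsub : Ioi s ⊆ Ioi a := Ioi_subset_Ioi has
  have hw_ae : ∀ᵐ u ∂μ.restrict (Ioi a), 0 < w u :=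
    ae_restrict_of_forall_mem measurableSet_Ioi hw
  calc (∫ u in Ioi s, f u ∂μ) ^ 2
      ≤ (∫ u in Ioi s, (w u)⁻¹ ∂μ) * ∫ u in Ioi s, f u ^ 2 * w u ∂μ :=
        sq_integral_le_integral_inv_mul_integral_sq_mul
          (ae_restrict_of_ae_restrict_of_subset hsub hw_ae) (hw_inv.mono_set hsub)
          (hf.mono_set hsub) (hfw.mono_set hsub)
    _ ≤ (∫ u in Ioi s, (w u)⁻¹ ∂μ) * ∫ u in Ioi a, f u ^ 2 * w u ∂μ :=
        mul_le_mul_of_nonneg_left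
          (setIntegral_mono_set hfw (hw_ae.mono fun u hu => by positivity) hsub.eventuallyLE)
          (integral_nonneg_of_ae ((ae_restrict_of_ae_restrict_of_subset hsub hw_ae).mono
            fun u hu => inv_nonneg.2 hu.le))

theorem stmt4_general (v w : ℝ → ℝ)
    (hv : ∀ u ∈ Set.Ioi (0 : ℝ), 0 < v u)
    (hw : ∀ u ∈ Set.Ioi (0 : ℝ), 0 < w u)
    (hw1 : IntegrableOn (fun u => (w u)⁻¹) (Set.Ioi 0))
    (hCvw : IntegrableOn (fun s => (∫ u in Set.Ioi s, (w u)⁻¹) * v s) (Set.Ioi 0))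
    (d1 d2 : ℝ → ℝ)
    (hrep' : ∀ s ∈ Set.Ici (0 : ℝ), d1 s = -∫ u in Set.Ioi s, d2 u)
    (hint' : IntegrableOn d2 (Set.Ioi 0))
    (hd2 : IntegrableOn (fun u => (d2 u) ^ 2 * w u) (Set.Ioi 0)) :
    IntegrableOn (fun s => (d1 s) ^ 2 * v s) (Set.Ioi 0) ∧
    ∫ s in Set.Ioi (0 : ℝ), (d1 s) ^ 2 * v s ≤
      (∫ s in Set.Ioi (0 : ℝ), (∫ u in Set.Ioi s, (w u)⁻¹) * v s) *
        ∫ u in Set.Ioi (0 : ℝ), (d2 u) ^ 2 * w u := by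
  set I : ℝ → ℝ := fun s => ∫ u in Ioi s, (w u)⁻¹
  set B := ∫ u in Ioi (0 : ℝ), d2 u ^ 2 * w u
  have hI_pos : ∀ s ∈ Ioi (0 : ℝ), 0 < I s := fun s hs =>
    integral_pos_of_ae_pos (by simp) (ae_restrict_of_forall_mem measurableSet_Ioi fun u hu =>
      inv_pos.2 (hw u (lt_trans hs hu : (0 : ℝ) < u))) (hw1.mono_set (Ioi_subset_Ioi hs.le))
  have hbound : ∀ s ∈ Ioi (0 : ℝ), d1 s ^ 2 * v s ≤ I s * v s * B := fun s hs => by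
    have hcs := sq_integral_Ioi_le hs.le hw hw1 hint'.aestronglyMeasurable hd2
    rw [hrep' s (mem_Ici.2 hs.le), neg_sq]
    exact (mul_le_mul_of_nonneg_right hcs (hv s hs).le).trans_eq (by ring)
  have hd1_meas : AEStronglyMeasurable d1 (volume.restrict (Ioi 0)) :=
    (aestronglyMeasurable_integral_Ioi hint').neg.congr (ae_restrict_of_forall_mem
      measurableSet_Ioi fun s hs => (hrep' s (mem_Ici.2 (le_of_lt hs))).symm)
  have hv_meas : AEStronglyMeasurable v (volume.restrict (Ioi 0)) :=
    (aestronglyMeasurable_integral_Ioi hw1).of_mul_left (ae_restrict_of_forall_mem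
      measurableSet_Ioi fun s hs => (hI_pos s hs).ne') hCvw.aestronglyMeasurable
  have hdom : IntegrableOn (fun s => I s * v s * B) (Ioi 0) := hCvw.mul_const B
  have hint : IntegrableOn (fun s => d1 s ^ 2 * v s) (Ioi 0) :=
    hdom.mono' ((hd1_meas.pow 2).mul hv_meas) <|
      ae_restrict_of_forall_mem measurableSet_Ioi fun s hs => by
        rw [Real.norm_of_nonneg (by have := hv s hs; positivity)]
        exact hbound s hs
  refine ⟨hint, ?_⟩
  calc ∫ s in Ioi (0 : ℝ), d1 s ^ 2 * v s ≤ ∫ s in Ioi (0 : ℝ), I s * v s * B :=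
        setIntegral_mono_on hint hdom measurableSet_Ioi hbound
    _ = (∫ s in Ioi (0 : ℝ), I s * v s) * B := integral_mul_const B _

/-- If `C_{vw} = ∫_0^∞ (∫_s^∞ w(u)⁻¹ du) v(s) ds < ∞` then every `x ∈ F_w^2` lies in `F_v^1`
with `‖x‖_{F_v^1} ≤ C_{vw}^{1/2} ‖x‖_{F_w^2}`, i.e. the inclusion `F_w^2 ↪ F_v^1` is bounded.
Here `d1 = x'` and `d2 = x''`, with `x' s = -∫_s^∞ x''`. -/
theorem stmt4 (v w : ℝ → ℝ)
    (hv : ∀ u ∈ Set.Ioi (0 : ℝ), 0 < v u)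
    (hw : ∀ u ∈ Set.Ioi (0 : ℝ), 0 < w u)
    (hw1 : IntegrableOn (fun u => (w u)⁻¹) (Set.Ioi 0))
    (hCvw : IntegrableOn (fun s => (∫ u in Set.Ioi s, (w u)⁻¹) * v s) (Set.Ioi 0))
    (x d1 d2 : ℝ → ℝ)
    (hrep' : ∀ s ∈ Set.Ici (0 : ℝ), d1 s = -∫ u in Set.Ioi s, d2 u)
    (hint' : IntegrableOn d2 (Set.Ioi 0))
    (hd2 : IntegrableOn (fun u => (d2 u) ^ 2 * w u) (Set.Ioi 0)) :
    IntegrableOn (fun s => (d1 s) ^ 2 * v s) (Set.Ioi 0) ∧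
    ∫ s in Set.Ioi (0 : ℝ), (d1 s) ^ 2 * v s ≤
      (∫ s in Set.Ioi (0 : ℝ), (∫ u in Set.Ioi s, (w u)⁻¹) * v s) *
        ∫ u in Set.Ioi (0 : ℝ), (d2 u) ^ 2 * w u :=
  stmt4_general v w hv hw hw1 hCvw d1 d2 hrep' hint' hd2
end

section
/- Let F be a Hilbert space of continuous functions on [0,∞) in which all evaluation functionals δ_s are bounded, let t ∈ [0,∞), and let P ∈ F with P(t) = 1. Suppose φ ∈ F* annihilates every function of the form 1_{[t,∞)}(P - j) and every function of the form 1_{[0,t]}(P - j) for all j ∈ F with j(t) = 1, assuming these truncated functions lie in F. Then φ = 0. -/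
/-- Core functional-analytic step of the uniqueness of hedging strategies (Proposition 3.7).
`F` is a Hilbert space of functions on the real line (realized through an injective linear
map `ι` into functions), `P ∈ F` is the bond price curve with `P t = 1` and `⟨φ, P⟩ = 0`.
If `φ ∈ F*` annihilates every truncation `1_{[t,∞)}(P - j)` and `1_{(-∞,t]}(P - j)` for all
`j ∈ F` with `j t = 1` (these truncations being assumed to lie in `F`), then `φ = 0`. -/
theorem stmt5 {F : Type*} [NormedAddCommGroup F] [InnerProductSpace ℝ F]
    (ι : F →ₗ[ℝ] (ℝ → ℝ)) (hι : Function.Injective ι)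
    (t : ℝ) (P : F) (hPt : ι P t = 1)
    (φ : F →L[ℝ] ℝ) (hφP : φ P = 0)
    (hex : ∀ j : F, ι j t = 1 → ∃ y z : F,
      ι y = (Set.Ici t).indicator (fun s => ι P s - ι j s) ∧
      ι z = (Set.Iic t).indicator (fun s => ι P s - ι j s))
    (hann : ∀ j y : F, ι j t = 1 →
      (ι y = (Set.Ici t).indicator (fun s => ι P s - ι j s) ∨
       ι y = (Set.Iic t).indicator (fun s => ι P s - ι j s)) → φ y = 0) :
    φ = 0 := by

  have key : ∀ j : F, ι j t = 1 → φ j = 0 := by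
    intro j hj
    obtain ⟨y, z, hy, hz⟩ := hex j hj
    have hyz : y + z = P - j := by
      apply hι
      funext s
      have h1 : ι (y + z) s = ι y s + ι z s := by simp
      have h2 : ι (P - j) s = ι P s - ι j s := by simp
      rw [h1, h2, hy, hz]
      rcases lt_trichotomy s t with h | h | h
      · simp [Set.indicator_apply, not_le.mpr h, h.le]
      · subst h
        simp [Set.indicator_apply, hPt, hj]
      · simp [Set.indicator_apply, not_le.mpr h, h.le]
    have hy0 : φ y = 0 := hann j y hj (Or.inl hy)
    have hz0 : φ z = 0 := hann j z hj (Or.inr hz)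
    have : φ (y + z) = 0 := by rw [map_add, hy0, hz0, add_zero]
    rw [hyz, map_sub, hφP] at this
    linarith
  ext x
  have hj : ι (x + (1 - ι x t) • P) t = 1 := by
    simp [hPt]
  have := key (x + (1 - ι x t) • P) hj
  rw [map_add, map_smul, hφP] at this
  simpa using this
end
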